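/- For every (a,b) ∈ ℤ² and every i ∈ ℤ, the rational function (γ*_X)ⁱ 𝕀(a,b) is a Laurent polynomial in X, Y with nonnegative integer coefficients. -/

import Mathlib

noncomputable section

/-- The field ℚ(X,Y) of rational functions in two variables. -/
abbrev RatField : Type := FractionRing (MvPolynomial (Fin 2) ℚ)

noncomputable def Xv : RatField :=
  algebraMap (MvPolynomial (Fin 2) ℚ) RatField (MvPolynomial.X 0)

noncomputable def Yv : RatField :=
  algebraMap (MvPolynomial (Fin 2) ℚ) RatField (MvPolynomial.X 1)

/-- The canonical function 𝕀(a,b), defined piecewise over the five cones. -/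
noncomputable def Ican (a b : ℤ) : RatField :=
  if a ≤ 0 ∧ 0 ≤ b then Xv ^ a * Yv ^ b
  else if a ≤ 0 ∧ b ≤ 0 then ((1 + Xv) / (Xv * Yv)) ^ (-b) * Xv ^ a
  else if 0 ≤ a ∧ b ≤ 0 then
    ((1 + Xv + Xv * Yv) / Yv) ^ a * ((1 + Xv) / (Xv * Yv)) ^ (-b)
  else if 0 ≤ b ∧ b ≤ a then
    ((1 + Yv) * Xv) ^ b * ((1 + Xv + Xv * Yv) / Yv) ^ (a - b)
  else Yv ^ (b - a) * ((1 + Yv) * Xv) ^ a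

/-!
The five functions `X⁻¹, Y, (1 + Y)X, (1 + X + XY)/Y, (1 + X)/(XY)` are the cluster variables of
type `A₂`, and `γ*` permutes them cyclically. On each of the five cones `𝕀(a,b)` is a monomial with
nonnegative exponents in two cyclically consecutive cluster variables, so every `(γ*)ⁱ 𝕀(a,b)` is
again such a monomial. Each cluster variable is visibly a Laurent polynomial with nonnegative
coefficients, and these form a semiring.
-/

theorem MvPolynomial.algebraMap_ne_zero_of_eval_ne_zero {σ R K : Type*} [CommRing R] [CommRing K]
    [Algebra (MvPolynomial σ R) K] [IsFractionRing (MvPolynomial σ R) K]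
    {p : MvPolynomial σ R} (x : σ → R) (h : MvPolynomial.eval x p ≠ 0) :
    algebraMap (MvPolynomial σ R) K p ≠ 0 :=
  (map_ne_zero_iff _ (IsFractionRing.injective _ K)).mpr fun hp ↦ h (by rw [hp, map_zero])

theorem Xv_ne_zero : Xv ≠ 0 :=
  MvPolynomial.algebraMap_ne_zero_of_eval_ne_zero (fun _ ↦ 1) (by simp)

theorem Yv_ne_zero : Yv ≠ 0 :=
  MvPolynomial.algebraMap_ne_zero_of_eval_ne_zero (fun _ ↦ 1) (by simp)

theorem one_add_Yv_ne_zero : 1 + Yv ≠ 0 := by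
  have h := MvPolynomial.algebraMap_ne_zero_of_eval_ne_zero (K := RatField)
    (p := 1 + MvPolynomial.X (σ := Fin 2) (R := ℚ) 1) (fun _ ↦ 1) (by norm_num)
  rwa [map_add, map_one] at h

theorem zpow_mem_of_nonneg {K : Type*} [DivisionRing K] {S : Subsemiring K} {x : K} (hx : x ∈ S)
    {n : ℤ} (hn : 0 ≤ n) : x ^ n ∈ S := by
  lift n to ℕ using hn
  rw [zpow_natCast]
  exact pow_mem hx n

theorem zpow_smul_eq_of_smul_eq_add_one {G α R : Type*} [Group G] [MulAction G α]
    [AddCommGroupWithOne R] {g : G} {t : R → α} (h : ∀ k, g • t k = t (k + 1)) (i : ℤ) (k : R) :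
    (g ^ i) • t k = t (k + i) := by
  induction i using Int.induction_on generalizing k with
  | zero => simp
  | succ n ih => rw [zpow_add_one, mul_smul, h, ih]; push_cast; congr 1; abel
  | pred n ih =>
    have h_inv : g⁻¹ • t k = t (k - 1) := inv_smul_eq_iff.mpr (by rw [h, sub_add_cancel])
    rw [zpow_sub_one, mul_smul, h_inv, ih]; push_cast; congr 1; abel

def clusterVar : ZMod 5 → RatField :=
  ![Xv⁻¹, Yv, (1 + Yv) * Xv, (1 + Xv + Xv * Yv) / Yv, (1 + Xv) / (Xv * Yv)]

theorem exists_Ican_eq_clusterVar_monomial (a b : ℤ) :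
    ∃ k : ZMod 5, ∃ m n : ℤ, 0 ≤ m ∧ 0 ≤ n ∧
      Ican a b = clusterVar k ^ m * clusterVar (k + 1) ^ n := by
  unfold Ican
  split_ifs with h₁ h₂ h₃ h₄
  · refine ⟨0, -a, b, by omega, h₁.2, ?_⟩
    show _ = Xv⁻¹ ^ (-a) * Yv ^ b
    rw [inv_zpow', neg_neg]
  · refine ⟨4, -b, -a, by omega, by omega, ?_⟩
    show _ = ((1 + Xv) / (Xv * Yv)) ^ (-b) * Xv⁻¹ ^ (-a)
    rw [inv_zpow', neg_neg]
  · exact ⟨3, a, -b, h₃.1, by omega, rfl⟩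
  · exact ⟨2, b, a - b, h₄.1, by omega, rfl⟩
  · exact ⟨1, b - a, a, by omega, by omega, rfl⟩

theorem clusterVar_mem_closure (k : ZMod 5) :
    clusterVar k ∈ Subsemiring.closure {Xv, Xv⁻¹, Yv, Yv⁻¹} := by
  have gen {x : RatField} (hx : x ∈ ({Xv, Xv⁻¹, Yv, Yv⁻¹} : Set RatField)) :
      x ∈ Subsemiring.closure {Xv, Xv⁻¹, Yv, Yv⁻¹} :=
    Subsemiring.subset_closure hx
  have hX := gen (x := Xv) (by simp)
  have hX' := gen (x := Xv⁻¹) (by simp)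
  have hY := gen (x := Yv) (by simp)
  have hY' := gen (x := Yv⁻¹) (by simp)
  have := Xv_ne_zero
  have := Yv_ne_zero
  fin_cases k
  · exact hX'
  · exact hY
  · show (1 + Yv) * Xv ∈ _
    rw [add_mul, one_mul]
    exact add_mem hX (mul_mem hY hX)
  · show (1 + Xv + Xv * Yv) / Yv ∈ _
    rw [show (1 + Xv + Xv * Yv) / Yv = Yv⁻¹ + Xv * Yv⁻¹ + Xv by field_simp]
    exact add_mem (add_mem hY' (mul_mem hX hY')) hX
  · show (1 + Xv) / (Xv * Yv) ∈ _
    rw [show (1 + Xv) / (Xv * Yv) = Xv⁻¹ * Yv⁻¹ + Yv⁻¹ by field_simp]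
    exact add_mem (mul_mem hX' hY') hY'

theorem smul_clusterVar {γ : RingAut RatField} (hγX : γ Xv = Yv⁻¹) (hγY : γ Yv = (1 + Yv) * Xv)
    (k : ZMod 5) : γ • clusterVar k = clusterVar (k + 1) := by
  have := Xv_ne_zero
  have := Yv_ne_zero
  have := one_add_Yv_ne_zero
  rw [RingAut.smul_def]
  fin_cases k
  · show γ Xv⁻¹ = Yv
    rw [map_inv₀, hγX, inv_inv]
  · exact hγY
  · show γ ((1 + Yv) * Xv) = (1 + Xv + Xv * Yv) / Yv
    rw [map_mul, map_add, map_one, hγX, hγY]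
    field_simp
    ring
  · show γ ((1 + Xv + Xv * Yv) / Yv) = (1 + Xv) / (Xv * Yv)
    rw [map_div₀, map_add, map_add, map_one, map_mul, hγX, hγY]
    field_simp
    ring
  · show γ ((1 + Xv) / (Xv * Yv)) = Xv⁻¹
    rw [map_div₀, map_mul, map_add, map_one, hγX, hγY]
    field_simp
    ring

/-- For every (a,b) ∈ ℤ² and every i ∈ ℤ, (γ*)ⁱ 𝕀(a,b) is a Laurent polynomial in X, Y
with nonnegative integer coefficients, i.e. lies in the subsemiring generated by
X, X⁻¹, Y, Y⁻¹. -/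
theorem canonical_map_universally_positive
    (γ : RingAut RatField)
    (hγX : γ Xv = Yv⁻¹)
    (hγY : γ Yv = (1 + Yv) * Xv) :
    ∀ (i : ℤ) (a b : ℤ),
      (γ ^ i) (Ican a b) ∈ Subsemiring.closure {Xv, Xv⁻¹, Yv, Yv⁻¹} := by
  intro i a b
  obtain ⟨k, m, n, hm, hn, h⟩ := exists_Ican_eq_clusterVar_monomial a b
  have hγi (k : ZMod 5) : (γ ^ i) (clusterVar k) = clusterVar (k + i) := by
    rw [← RingAut.smul_def, zpow_smul_eq_of_smul_eq_add_one (smul_clusterVar hγX hγY)]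
  rw [h, map_mul, map_zpow₀, map_zpow₀, hγi, hγi]
  exact mul_mem (zpow_mem_of_nonneg (clusterVar_mem_closure _) hm)
    (zpow_mem_of_nonneg (clusterVar_mem_closure _) hn)

end
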